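/- arXiv:2411.02682 — 2 statements merged into one kernel-verified Lean document; each statement's English description precedes it below -/
import Mathlib

section
/- Let φ ∈ G^∨ be a linear functional on a free module G ≅ R^n over a commutative ring R. If the components φ_1,…,φ_n of φ generate the unit ideal of R (equivalently, φ is surjective), then the Koszul complex Kosz(φ) is exact in every degree. -/
/-!
Since the `φ(eᵢ)` generate the unit ideal, some `g ∈ G` has `φ g = 1`. Contraction with `φ` is
an antiderivation, so `φ ⌋ (g ∧ x) = φ(g) x - g ∧ (φ ⌋ x)`: wedging with `g` is a contracting
homotopy of `Kosz(φ)`, and a cycle `x` is the boundary of `g ∧ x`.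
-/

open ExteriorAlgebra

section

variable {R M : Type*} [CommRing R] [AddCommGroup M] [Module R M]

theorem Module.Dual.exists_eq_one_of_span_range_eq_top {ι : Type*} (φ : Module.Dual R M)
    (v : ι → M) (h : Ideal.span (Set.range fun i => φ (v i)) = ⊤) : ∃ g, φ g = 1 := by
  have hspan : Ideal.span (Set.range fun i => φ (v i)) ≤ LinearMap.range φ :=
    Ideal.span_le.2 <| Set.range_subset_iff.2 fun i => LinearMap.mem_range_self φ (v i)
  exact hspan (h ▸ Submodule.mem_top : (1 : R) ∈ _)

theorem CliffordAlgebra.contractLeft_ι_mul_of_contractLeft_eq_zero {Q : QuadraticForm R M}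
    {d : Module.Dual R M} {m : M} (hm : d m = 1) {x : CliffordAlgebra Q}
    (hx : contractLeft d x = 0) : contractLeft d (ι Q m * x) = x := by
  rw [contractLeft_ι_mul, hx, hm, mul_zero, sub_zero, one_smul]

theorem ExteriorAlgebra.ι_mul_mem_exteriorPower_succ (m : M) {p : ℕ} {x : ExteriorAlgebra R M}
    (hx : x ∈ ⋀[R]^p M) : ι R m * x ∈ ⋀[R]^(p + 1) M := by
  rw [exteriorPower, pow_succ']
  exact Submodule.mul_mem_mul (LinearMap.mem_range_self _ m) hx

end

/-- Let `φ ∈ G^∨` be a linear functional on `G = Rⁿ` whose components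
`φ₁,…,φₙ` (i.e. the values `φ(eᵢ)` on the standard basis) generate the unit ideal of `R`.
Then the Koszul complex `Kosz(φ)`, with differentials given by contraction with `φ`,
is exact in every degree: every cycle in `Λ^p G` is a boundary from `Λ^{p+1} G`
(for `p = 0` this includes surjectivity of `Λ^1 G → Λ^0 G = R`). -/
theorem koszul_exact_of_span_eq_top
    (R : Type*) [CommRing R] (n : ℕ) (φ : Module.Dual R (Fin n → R))
    (h : Ideal.span (Set.range fun i : Fin n => φ (Pi.single i 1)) = ⊤) :
    ∀ (p : ℕ), ∀ x ∈ ⋀[R]^p (Fin n → R),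
      CliffordAlgebra.contractLeft (Q := (0 : QuadraticForm R (Fin n → R))) φ x = 0 →
      ∃ y ∈ ⋀[R]^(p+1) (Fin n → R),
        CliffordAlgebra.contractLeft (Q := (0 : QuadraticForm R (Fin n → R))) φ y = x := by
  obtain ⟨g, hg⟩ := φ.exists_eq_one_of_span_range_eq_top _ h
  intro p x hx hdx
  exact ⟨ι R g * x, ι_mul_mem_exteriorPower_succ g hx,
    CliffordAlgebra.contractLeft_ι_mul_of_contractLeft_eq_zero hg hdx⟩
end

section
/- Consider the hypersurface X = {xy − zw = 0} ⊂ ℂ⁴ with coordinates (x,y,z,w) (the 2×2 matrices of rank ≤ 1) and the map g(x,y,z,w) = (z − w, y − x^k). The stratified critical locus of g on the rank-1 stratum V¹ = X ∖ {0}, intersected with the central fiber g^{-1}(0), consists only of the origin; i.e. g restricted to X has an isolated singularity in the stratified sense at 0. -/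
section

variable {R : Type*} [CommRing R] [NoZeroDivisors R] [CharZero R]

theorem eq_zero_and_eq_zero_of_sub_eq_zero_of_add_eq_zero {z w : R} (hsub : z - w = 0)
    (hadd : w + z = 0) : z = 0 ∧ w = 0 := by
  obtain rfl : z = w := sub_eq_zero.mp hsub
  exact ⟨add_self_eq_zero.mp hadd, add_self_eq_zero.mp hadd⟩

theorem eq_zero_and_eq_zero_of_add_natCast_mul_pow_eq_zero_of_sub_pow_eq_zero {x y : R}
    {k : ℕ} (hk : k ≠ 0) (hadd : y + k * x ^ k = 0) (hsub : y - x ^ k = 0) :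
    x = 0 ∧ y = 0 := by
  obtain rfl : y = x ^ k := sub_eq_zero.mp hsub
  have hpow : ((k : R) + 1) * x ^ k = 0 := by linear_combination hadd
  have hx : x = 0 :=
    (pow_eq_zero_iff hk).mp ((mul_eq_zero.mp hpow).resolve_left (Nat.cast_add_one_ne_zero k))
  exact ⟨hx, by rw [hx, zero_pow hk]⟩

end

/-- On the hypersurface `X = {xy − zw = 0} ⊂ ℂ⁴` (the 2×2 matrices
of rank ≤ 1) with the map `g(x,y,z,w) = (z − w, y − x^k)`, the stratified critical
locus of `g` on the stratum `V¹ = X ∖ {0}` — cut out by `w + z = 0` and `y + k·x^k = 0`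
together with `xy − zw = 0` — meets the central fiber `g⁻¹(0)` only at the origin:
the common zero locus of `xy − zw`, `w + z`, `y + k·x^k`, `z − w`, `y − x^k` is `{0}`.
I.e. `g` restricted to `X` has an isolated singularity in the stratified sense at `0`. -/
theorem isolated_stratified_singularity (k : ℕ) (hk : 1 ≤ k) :
    {p : ℂ × ℂ × ℂ × ℂ |
        p.1 * p.2.1 - p.2.2.1 * p.2.2.2 = 0 ∧
        p.2.2.2 + p.2.2.1 = 0 ∧
        p.2.1 + (k : ℂ) * p.1 ^ k = 0 ∧
        p.2.2.1 - p.2.2.2 = 0 ∧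
        p.2.1 - p.1 ^ k = 0}
      = {0} := by
  have hk0 : k ≠ 0 := Nat.one_le_iff_ne_zero.mp hk
  ext ⟨x, y, z, w⟩
  simp only [Set.mem_ofPred_eq, Set.mem_singleton_iff, Prod.ext_iff, Prod.fst_zero,
    Prod.snd_zero]
  constructor
  · rintro ⟨-, hwz, hyx, hzw, hxy⟩
    obtain ⟨rfl, rfl⟩ := eq_zero_and_eq_zero_of_sub_eq_zero_of_add_eq_zero hzw hwz
    obtain ⟨rfl, rfl⟩ :=
      eq_zero_and_eq_zero_of_add_natCast_mul_pow_eq_zero_of_sub_pow_eq_zero hk0 hyx hxy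
    exact ⟨rfl, rfl, rfl, rfl⟩
  · rintro ⟨rfl, rfl, rfl, rfl⟩
    simp [zero_pow hk0]
end
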